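/- All return substitutions of a primitive substitution have the same non-zero eigenvalues: for any two prefixes u, v of the fixed point X of a primitive substitution τ, the incidence matrices of τ_u and τ_v have the same non-zero eigenvalues. -/

import Mathlib

namespace Cobham

open Filter

variable {A : Type*} {B : Type*}

/-- The factor `X_i X_{i+1} ... X_{i+n-1}` of the sequence `X`. -/
def word (X : ℕ → A) (i n : ℕ) : List A := (List.range n).map fun k => X (i + k)

/-- `u` occurs in `X` at position `i`. -/
def OccursAt (X : ℕ → A) (u : List A) (i : ℕ) : Prop := word X i u.length = u

def IsFactor (X : ℕ → A) (u : List A) : Prop := ∃ i, OccursAt X u i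

def IsPrefix (X : ℕ → A) (u : List A) : Prop := OccursAt X u 0

/-- Uniformly recurrent: gaps between successive occurrences of any factor are bounded. -/
def UnifRec (X : ℕ → A) : Prop :=
  ∀ u, IsFactor X u → ∃ g : ℕ, ∀ i : ℕ, ∃ j, i ≤ j ∧ j ≤ i + g ∧ OccursAt X u j

/-- Return words on `u`: factors between two successive occurrences of `u` in `X`. -/
def ReturnWords (X : ℕ → A) (u : List A) : Set (List A) :=
  { v | ∃ i j, OccursAt X u i ∧ OccursAt X u j ∧ i < j ∧
      (∀ k, i < k → k < j → ¬ OccursAt X u k) ∧ v = word X i (j - i) }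

/-- Application of a morphism to a word, by concatenation. -/
def wordApply (σ : A → List B) (w : List A) : List B := w.flatMap σ

/-- Iterate of a morphism. -/
def mPow (σ : A → List A) : ℕ → A → List A
  | 0 => fun a => [a]
  | k + 1 => fun a => wordApply σ (mPow σ k a)

def Nonerasing (σ : A → List A) : Prop := ∀ a, σ a ≠ []

/-- Primitivity: some power of the morphism maps every letter to a word
containing every letter. -/
def Primitive (σ : A → List A) : Prop := ∃ k, 0 < k ∧ ∀ a b : A, b ∈ mPow σ k a

/-- Primitivity restricted to a set of letters. -/
def PrimitiveOn (σ : A → List A) (S : Set A) : Prop :=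
  ∃ k, 0 < k ∧ ∀ a ∈ S, ∀ b ∈ S, b ∈ mPow σ k a

/-- `X` is a fixed point of `σ`: the image of every prefix of `X` is a prefix of `X`. -/
def IsFixedPt (σ : A → List A) (X : ℕ → A) : Prop :=
  ∀ n, OccursAt X (wordApply σ (word X 0 n)) 0

def UltPeriodic (X : ℕ → A) : Prop :=
  ∃ N p : ℕ, 0 < p ∧ ∀ n, N ≤ n → X (n + p) = X n

def Periodic (X : ℕ → A) : Prop := ∃ p : ℕ, 0 < p ∧ ∀ n, X (n + p) = X n

/-- `u` occurs at position `i` inside the word `w`. -/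
def WOcc (u w : List A) (i : ℕ) : Prop :=
  i + u.length ≤ w.length ∧ (w.drop i).take u.length = u

/-- `D` is the derived sequence of `X` on `u`: a sequence of return words on `u`
whose concatenation is `X`. -/
def IsDerived (X : ℕ → A) (u : List A) (D : ℕ → List A) : Prop :=
  (∀ n, D n ∈ ReturnWords X u) ∧ ∀ n, OccursAt X ((word D 0 n).flatten) 0

/-- `τu` is the return substitution of `τ` on `u` (on the alphabet of return words):
`Θ_u ∘ τ_u = τ ∘ Θ_u`. -/
def RetSub (τ : A → List A) (X : ℕ → A) (u : List A)
    (τu : List A → List (List A)) : Prop :=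
  ∀ r ∈ ReturnWords X u,
    (∀ s ∈ τu r, s ∈ ReturnWords X u) ∧ (τu r).flatten = wordApply τ r

/-- Eigenvalue of a complex matrix. -/
def IsEig {n : Type*} [Fintype n] (M : Matrix n n ℂ) (μ : ℂ) : Prop :=
  ∃ v : n → ℂ, v ≠ 0 ∧ M.mulVec v = μ • v

/-- Incidence matrix of a morphism, as a complex matrix. -/
def incMat [Fintype A] [DecidableEq A] (σ : A → List A) : Matrix A A ℂ :=
  Matrix.of fun i j => (((σ j).count i : ℕ) : ℂ)

/-- Incidence matrix of a return substitution, indexed by the set of return words. -/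
def retMat [DecidableEq A] (τu : List A → List (List A)) (S : Set (List A))
    [Fintype S] : Matrix S S ℂ :=
  Matrix.of fun i j => (((τu (j : List A)).count (i : List A) : ℕ) : ℂ)

/-- `α` is the dominant eigenvalue of the incidence matrix of `σ`. -/
def IsDomEig [Fintype A] [DecidableEq A] (σ : A → List A) (α : ℝ) : Prop :=
  IsEig (incMat σ) (α : ℂ) ∧ ∀ μ : ℂ, IsEig (incMat σ) μ → ‖μ‖ ≤ α

/-- `X` is `α`-substitutive: the image under a letter-to-letter morphism of the
fixed point of a primitive substitution with dominant eigenvalue `α`. -/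
def IsSubstitutiveWith {A : Type*} (α : ℝ) (X : ℕ → A) : Prop :=
  ∃ (C : Type) (hF : Fintype C) (hD : DecidableEq C) (σ : C → List C) (c : C)
    (Y : ℕ → C) (ψ : C → A),
    Nonerasing σ ∧ (σ c).head? = some c ∧ Primitive σ ∧
    Y 0 = c ∧ IsFixedPt σ Y ∧ (∀ n, X n = ψ (Y n)) ∧ @IsDomEig C hF hD σ α

/-- Perron number: a real algebraic integer `α ≥ 1` strictly dominating the
absolute values of its other conjugates. -/
def IsPerron (α : ℝ) : Prop :=
  1 ≤ α ∧ IsIntegral ℤ α ∧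
    ∀ β : ℂ, Polynomial.aeval β (minpoly ℤ α) = 0 → β ≠ (α : ℂ) → ‖β‖ < α

/-!
Suppose `|u| ≤ |v|`, so that `u` is a prefix of `v` and every return word on `v` factors,
uniquely, into return words on `u`; let `L` count these factorizations. For a suitable `n`
(`n = |v|`, or `n = 0` when the alphabet is `{a}`), `τⁿ` maps occurrences of `u` in `X` to
occurrences of `v`, hence return words on `u` to products of return words on `v`; let `K`
count those. Uniqueness of factorizations gives `L M_v = M_u L`, `K M_u = M_v K`,
`L K = M_uⁿ` and `K L = M_vⁿ`, so `K` and `L` carry eigenvectors of a non-zero eigenvalue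
back and forth between `M_u` and `M_v`.
-/

section

variable {X : ℕ → A} {u w : List A}

@[simp] lemma length_word (X : ℕ → A) (i n : ℕ) : (word X i n).length = n := by
  simp [word]

lemma word_add (X : ℕ → A) (i m n : ℕ) :
    word X i (m + n) = word X i m ++ word X (i + m) n := by
  simp only [word, List.range_add, List.map_append, List.map_map]
  congr 1
  exact List.map_congr_left fun k _ => by simp [Nat.add_assoc]

lemma occursAt_append {p : List A} {i : ℕ} :
    OccursAt X (p ++ w) i ↔ OccursAt X p i ∧ OccursAt X w (i + p.length) := by
  unfold OccursAt
  rw [List.length_append, word_add]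
  exact ⟨fun h => List.append_inj h (length_word ..), fun ⟨h₁, h₂⟩ => by rw [h₁, h₂]⟩

lemma OccursAt.of_prefix {p : List A} {i : ℕ} (hw : OccursAt X w i) (hp : p <+: w) :
    OccursAt X p i := by
  obtain ⟨t, rfl⟩ := hp
  exact (occursAt_append.1 hw).1

lemma OccursAt.prefix_of_length_le {p : List A} {i : ℕ} (hw : OccursAt X w i)
    (hp : OccursAt X p i) (hle : p.length ≤ w.length) : p <+: w := by
  obtain ⟨k, hk⟩ := Nat.exists_eq_add_of_le hle
  have hw' : word X i w.length = w := hw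
  rw [← hw', hk, word_add, hp]
  exact List.prefix_append _ _

lemma mem_returnWords_iff {r : List A} :
    r ∈ ReturnWords X u ↔ r ≠ [] ∧ ∃ i, OccursAt X r i ∧ OccursAt X u i ∧
      OccursAt X u (i + r.length) ∧ ∀ k, 0 < k → k < r.length → ¬ OccursAt X u (i + k) := by
  constructor
  · rintro ⟨i, j, hi, hj, hij, hgap, rfl⟩
    refine ⟨fun h => by have := congrArg List.length h; simp at this; omega, i,
      by simp [OccursAt], hi, by simpa [show i + (j - i) = j by omega] using hj,
      fun k hk hkr => hgap _ (by omega) ?_⟩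
    simp only [length_word] at hkr
    omega
  · rintro ⟨hr, i, hri, hi, hj, hgap⟩
    have hpos := List.length_pos_iff.2 hr
    refine ⟨i, i + r.length, hi, hj, by omega, fun k hik hkj => ?_, ?_⟩
    · simpa [show i + (k - i) = k by omega] using hgap (k - i) (by omega) (by omega)
    · simpa [Nat.add_sub_cancel_left] using hri.symm

namespace ReturnWords

variable {r s : List A}

lemma ne_nil (hr : r ∈ ReturnWords X u) : r ≠ [] := (mem_returnWords_iff.1 hr).1

lemma prefix_append (hr : r ∈ ReturnWords X u) : u <+: r ++ u := by
  obtain ⟨-, i, hri, hi, hj, -⟩ := mem_returnWords_iff.1 hr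
  exact OccursAt.prefix_of_length_le (occursAt_append.2 ⟨hri, hj⟩) hi (by simp)

lemma not_append_prefix (hr : r ∈ ReturnWords X u) {p : List A} (hp : p ≠ [])
    (hlt : p.length < r.length) : ¬ p ++ u <+: r ++ u := by
  intro hpr
  obtain ⟨-, i, hri, hi, hj, hgap⟩ := mem_returnWords_iff.1 hr
  have := (occursAt_append.2 ⟨hri, hj⟩).of_prefix hpr
  exact hgap _ (List.length_pos_iff.2 hp) hlt (occursAt_append.1 this).2

lemma eq_of_append_eq_of_length_le (hr : r ∈ ReturnWords X u) (hs : s ∈ ReturnWords X u)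
    {R S : List A} (hR : u <+: R ++ u) (hS : u <+: S ++ u) (h : r ++ R = s ++ S)
    (hle : s.length ≤ r.length) : r = s := by
  rcases hle.lt_or_eq with hlt | heq
  · refine absurd ?_ (not_append_prefix hr (ne_nil hs) hlt)
    have hsu : s ++ u <+: r ++ (R ++ u) := by
      rw [← List.append_assoc, h, List.append_assoc]
      exact (List.prefix_append_right_inj s).2 hS
    exact List.prefix_of_prefix_length_le hsu
      ((List.prefix_append_right_inj r).2 hR) (by simp; omega)
  · exact (List.append_inj h heq.symm).1

end ReturnWords

/-- `l` is the factorization of `w` into return words on `u`, i.e. `Θ_u l = w`. -/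
def IsRetDecomp (X : ℕ → A) (u w : List A) (l : List (List A)) : Prop :=
  (∀ x ∈ l, x ∈ ReturnWords X u) ∧ l.flatten = w

lemma prefix_flatten_append {l : List (List A)} (hl : ∀ x ∈ l, x ∈ ReturnWords X u) :
    u <+: l.flatten ++ u := by
  induction l with
  | nil => simp
  | cons x l ih =>
    obtain ⟨t, ht⟩ := ih fun y hy => hl y (List.mem_cons_of_mem _ hy)
    rw [List.flatten_cons, List.append_assoc, ← ht, ← List.append_assoc]
    exact (ReturnWords.prefix_append (hl x List.mem_cons_self)).trans (List.prefix_append _ _)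

namespace IsRetDecomp

variable {l l₁ l₂ : List (List A)}

lemma unique (h₁ : IsRetDecomp X u w l₁) (h₂ : IsRetDecomp X u w l₂) : l₁ = l₂ := by
  induction l₁ generalizing l₂ w with
  | nil =>
    obtain ⟨h₂, rfl⟩ := h₂
    cases l₂ with
    | nil => rfl
    | cons s _ =>
      exact absurd (List.append_eq_nil_iff.1 h₁.2.symm).1 (ReturnWords.ne_nil (h₂ s (by simp)))
  | cons r l₁ ih =>
    obtain ⟨h₁, rfl⟩ := h₁
    obtain ⟨h₂, hfl⟩ := h₂
    cases l₂ with
    | nil =>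
      exact absurd (List.append_eq_nil_iff.1 hfl.symm).1 (ReturnWords.ne_nil (h₁ r (by simp)))
    | cons s l₂ =>
      simp only [List.flatten_cons] at hfl
      have hr := h₁ r (by simp)
      have hs := h₂ s (by simp)
      have hR := prefix_flatten_append fun x hx => h₁ x (List.mem_cons_of_mem _ hx)
      have hS := prefix_flatten_append fun x hx => h₂ x (List.mem_cons_of_mem _ hx)
      obtain rfl : r = s := by
        rcases le_total s.length r.length with hle | hle
        · exact ReturnWords.eq_of_append_eq_of_length_le hr hs hR hS hfl.symm hle
        · exact (ReturnWords.eq_of_append_eq_of_length_le hs hr hS hR hfl hle).symm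
      rw [ih ⟨fun x hx => h₁ x (List.mem_cons_of_mem _ hx), rfl⟩
        ⟨fun x hx => h₂ x (List.mem_cons_of_mem _ hx), List.append_cancel_left hfl⟩]

lemma flatMap {φ : List A → List A} {f : List A → List (List A)}
    (h : ∀ x ∈ l, IsRetDecomp X u (φ x) (f x)) :
    IsRetDecomp X u (l.flatMap φ) (l.flatMap f) := by
  refine ⟨fun y hy => ?_, ?_⟩
  · obtain ⟨x, hx, hyx⟩ := List.mem_flatMap.1 hy
    exact (h x hx).1 y hyx
  · induction l with
    | nil => rfl
    | cons x l ih =>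
      simp only [List.flatMap_cons, List.flatten_append, (h x List.mem_cons_self).2,
        ih fun y hy => h y (List.mem_cons_of_mem _ hy)]

end IsRetDecomp

lemma exists_isRetDecomp_word {p d : ℕ} (h₀ : OccursAt X u p) (hd : OccursAt X u (p + d)) :
    ∃ l, IsRetDecomp X u (word X p d) l := by
  induction d using Nat.strong_induction_on generalizing p with
  | _ d ih =>
    rcases Nat.eq_zero_or_pos d with rfl | hd0
    · exact ⟨[], by simp [IsRetDecomp, word]⟩
    classical
    -- the first return word starts at `p` and ends at the next occurrence of `u`
    have hex : ∃ m, 0 < m ∧ m ≤ d ∧ OccursAt X u (p + m) := ⟨d, hd0, le_rfl, hd⟩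
    obtain ⟨hm0, hmd, hm⟩ := Nat.find_spec hex
    set m := Nat.find hex
    have hgap : ∀ k, 0 < k → k < (word X p m).length → ¬ OccursAt X u (p + k) := by
      intro k hk hkm hocc
      rw [length_word] at hkm
      exact Nat.find_min hex hkm ⟨hk, by omega, hocc⟩
    have hret : word X p m ∈ ReturnWords X u :=
      mem_returnWords_iff.2 ⟨fun h => hm0.ne' (by simpa using congrArg List.length h), p,
        by simp [OccursAt], h₀, by simpa using hm, hgap⟩
    obtain ⟨l, hl, hfl⟩ :=
      ih (d - m) (by omega) hm (by rwa [Nat.add_assoc, Nat.add_sub_cancel' hmd])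
    refine ⟨word X p m :: l, ?_, ?_⟩
    · simpa [hret] using hl
    · rw [List.flatten_cons, hfl, ← word_add, Nat.add_sub_cancel' hmd]

lemma exists_isRetDecomp_of_occursAt {p : ℕ} (hw : OccursAt X w p) (h₀ : OccursAt X u p)
    (h₁ : OccursAt X u (p + w.length)) : ∃ l, IsRetDecomp X u w l := by
  have hw' : word X p w.length = w := hw
  simpa only [hw'] using exists_isRetDecomp_word h₀ h₁

lemma exists_isRetDecomp_of_prefix {v t : List A} (huv : u <+: v)
    (ht : t ∈ ReturnWords X v) : ∃ l, IsRetDecomp X u t l := by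
  obtain ⟨-, i, hti, hi, hj, -⟩ := mem_returnWords_iff.1 ht
  exact exists_isRetDecomp_of_occursAt hti (hi.of_prefix huv) (hj.of_prefix huv)

open Classical in
/-- The factorization of `w` into return words on `u`; junk value `[]` if there is none. -/
noncomputable def retDecomp (X : ℕ → A) (u w : List A) : List (List A) :=
  if h : ∃ l, IsRetDecomp X u w l then h.choose else []

lemma isRetDecomp_retDecomp (h : ∃ l, IsRetDecomp X u w l) :
    IsRetDecomp X u w (retDecomp X u w) := by
  rw [retDecomp, dif_pos h]
  exact h.choose_spec

lemma retDecomp_eq {l : List (List A)} (h : IsRetDecomp X u w l) : retDecomp X u w = l :=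
  (isRetDecomp_retDecomp ⟨l, h⟩).unique h

section Morphisms

lemma wordApply_append (σ : A → List B) (w w' : List A) :
    wordApply σ (w ++ w') = wordApply σ w ++ wordApply σ w' :=
  List.flatMap_append

lemma wordApply_flatten (σ : A → List B) (l : List (List A)) :
    wordApply σ l.flatten = l.flatMap (wordApply σ) := by
  induction l with
  | nil => rfl
  | cons x l ih => rw [List.flatten_cons, wordApply_append, ih, List.flatMap_cons]

lemma length_le_length_wordApply {σ : A → List A} (hσ : Nonerasing σ) (w : List A) :
    w.length ≤ (wordApply σ w).length := by
  induction w with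
  | nil => simp [wordApply]
  | cons x w ih =>
    have := List.length_pos_iff.2 (hσ x)
    simp only [wordApply, List.flatMap_cons, List.length_append, List.length_cons] at ih ⊢
    omega

@[simp] lemma wordApply_mPow_zero (σ : A → List A) (w : List A) : wordApply (mPow σ 0) w = w := by
  simp [wordApply, mPow]

lemma wordApply_mPow_succ (σ : A → List A) (k : ℕ) (w : List A) :
    wordApply (mPow σ (k + 1)) w = wordApply σ (wordApply (mPow σ k) w) :=
  List.flatMap_assoc.symm

lemma mPow_add (σ : A → List A) (j k : ℕ) (a : A) :
    mPow σ (k + j) a = wordApply (mPow σ j) (mPow σ k a) := by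
  induction j with
  | zero => simp
  | succ j ih =>
    rw [← Nat.add_assoc, wordApply_mPow_succ, ← ih]
    rfl

lemma wordApply_mPow_add (σ : A → List A) (j k : ℕ) (w : List A) :
    wordApply (mPow σ j) (wordApply (mPow σ k) w) = wordApply (mPow σ (k + j)) w := by
  simp only [wordApply, List.flatMap_assoc]
  exact List.flatMap_congr fun a _ => (mPow_add σ j k a).symm

lemma Nonerasing.mPow {σ : A → List A} (hσ : Nonerasing σ) (k : ℕ) : Nonerasing (mPow σ k) := by
  induction k with
  | zero => simp [Nonerasing, Cobham.mPow]
  | succ k ih =>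
    intro a h
    have := (length_le_length_wordApply hσ (Cobham.mPow σ k a)).trans_eq
      (congrArg List.length h)
    exact ih a (List.length_eq_zero_iff.1 (by simpa using this))

lemma length_mPow_ge {σ : A → List A} (hσ : Nonerasing σ) {a b : A} {t : List A}
    (ha : σ a = a :: b :: t) (k : ℕ) : k + 1 ≤ (mPow σ k a).length := by
  induction k with
  | zero => simp [mPow]
  | succ k ih =>
    have hb := List.length_pos_iff.2 (hσ.mPow k b)
    have : mPow σ (k + 1) a = mPow σ k a ++ mPow σ k b ++ wordApply (mPow σ k) t := by
      have h1 : mPow σ 1 a = σ a := by simp [mPow, wordApply]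
      rw [Nat.add_comm, mPow_add, h1, ha]
      simp [wordApply]
    rw [this, List.length_append, List.length_append]
    omega

end Morphisms

namespace IsFixedPt

variable {τ : A → List A}

lemma isPrefix_wordApply_mPow (hfix : IsFixedPt τ X) (k : ℕ) (hw : IsPrefix X w) :
    IsPrefix X (wordApply (mPow τ k) w) := by
  induction k with
  | zero => simpa using hw
  | succ k ih =>
    have h : word X 0 (wordApply (mPow τ k) w).length = wordApply (mPow τ k) w := ih
    rw [wordApply_mPow_succ, ← h]
    exact hfix _

lemma occursAt_wordApply_mPow (hfix : IsFixedPt τ X) (k : ℕ) {i : ℕ} (hw : OccursAt X w i) :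
    OccursAt X (wordApply (mPow τ k) w) (wordApply (mPow τ k) (word X 0 i)).length := by
  have hpre : IsPrefix X (word X 0 i ++ w) := occursAt_append.2 ⟨by simp [OccursAt], by simpa⟩
  have := hfix.isPrefix_wordApply_mPow k hpre
  rw [wordApply_append] at this
  simpa using (occursAt_append.1 this).2

lemma exists_isRetDecomp_image (hfix : IsFixedPt τ X) (k : ℕ)
    (himg : ∀ i, OccursAt X u i → OccursAt X w (wordApply (mPow τ k) (word X 0 i)).length)
    {t : List A} (ht : t ∈ ReturnWords X u) :
    ∃ l, IsRetDecomp X w (wordApply (mPow τ k) t) l := by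
  obtain ⟨-, i, hti, hi, hj, -⟩ := mem_returnWords_iff.1 ht
  have hti' : word X i t.length = t := hti
  refine exists_isRetDecomp_of_occursAt (hfix.occursAt_wordApply_mPow k hti) (himg i hi) ?_
  simpa [word_add, hti', wordApply_append] using himg _ hj

end IsFixedPt

lemma RetSub.isRetDecomp {τ : A → List A} {τu : List A → List (List A)}
    (hτu : RetSub τ X u τu) {r : List A} (hr : r ∈ ReturnWords X u) :
    IsRetDecomp X u (wordApply τ r) (τu r) :=
  hτu r hr

lemma RetSub.exists_isRetDecomp_mPow {τ : A → List A} {τu : List A → List (List A)}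
    (hτu : RetSub τ X u τu) (k : ℕ) :
    ∀ t ∈ ReturnWords X u, ∃ l, IsRetDecomp X u (wordApply (mPow τ k) t) l := by
  intro t ht
  induction k with
  | zero => exact ⟨[t], by simpa [IsRetDecomp] using ht⟩
  | succ k ih =>
    obtain ⟨l, hl⟩ := ih
    have := IsRetDecomp.flatMap fun x hx => hτu.isRetDecomp (hl.1 x hx)
    rw [← wordApply_flatten, hl.2, ← wordApply_mPow_succ] at this
    exact ⟨_, this⟩

section Counting

variable [DecidableEq A]

/-- `retMat τu S` is `countMat τu S S` by definition. -/
def countMat (f : List A → List (List A)) (S T : Set (List A)) : Matrix T S ℂ :=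
  Matrix.of fun t s => ((f s).count (t : List A) : ℂ)

lemma count_flatMap_eq_sum {T : Set (List A)} [Fintype T] (f : List A → List (List A))
    {l : List (List A)} (hl : ∀ x ∈ l, x ∈ T) (y : List A) :
    (l.flatMap f).count y = ∑ t : T, (f t).count y * l.count (t : List A) := by
  have hsum : (l.map (List.count y ∘ f)).sum = ∑ x ∈ l.toFinset, (f x).count y * l.count x := by
    rw [Finset.sum_list_map_count]
    refine Finset.sum_congr rfl fun x _ => ?_
    rw [smul_eq_mul, mul_comm, Function.comp_apply]
    congr!
  rw [List.count_flatMap, hsum, Finset.sum_set_coe (f := fun x => (f x).count y * l.count x)]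
  exact Finset.sum_subset (fun x hx => Set.mem_toFinset.2 (hl x (List.mem_toFinset.1 hx)))
    fun x _ hx => by rw [List.count_eq_zero_of_not_mem (a := x) (by simpa using hx), mul_zero]

lemma countMat_congr {S T : Set (List A)} {f g : List A → List (List A)}
    (h : ∀ s ∈ S, f s = g s) : countMat f S T = countMat g S T := by
  ext t s
  simp only [countMat, Matrix.of_apply, h s s.2]

lemma countMat_mul {S T U : Set (List A)} [Fintype T] (f g : List A → List (List A))
    (hg : ∀ s ∈ S, ∀ x ∈ g s, x ∈ T) :
    countMat f T U * countMat g S T = countMat (fun s => (g s).flatMap f) S U := by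
  ext y s
  simp only [Matrix.mul_apply, countMat, Matrix.of_apply, count_flatMap_eq_sum f (hg s s.2)]
  push_cast
  rfl

noncomputable def decompMat (τ : A → List A) (X : ℕ → A) (u : List A) (k : ℕ)
    (S : Set (List A)) : Matrix (ReturnWords X u) S ℂ :=
  countMat (fun r => retDecomp X u (wordApply (mPow τ k) r)) S (ReturnWords X u)

variable {τ : A → List A}

lemma decompMat_mul {S : Set (List A)} [Fintype (ReturnWords X w)] {j k : ℕ}
    (hj : ∀ t ∈ ReturnWords X w, ∃ l, IsRetDecomp X u (wordApply (mPow τ j) t) l)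
    (hk : ∀ r ∈ S, ∃ l, IsRetDecomp X w (wordApply (mPow τ k) r) l) :
    decompMat τ X u j (ReturnWords X w) * decompMat τ X w k S = decompMat τ X u (k + j) S := by
  rw [decompMat, decompMat, countMat_mul _ _ fun r hr => (isRetDecomp_retDecomp (hk r hr)).1]
  refine countMat_congr fun r hr => ?_
  obtain ⟨l, hl⟩ := hk r hr
  rw [retDecomp_eq hl]
  refine (retDecomp_eq ?_).symm
  have := IsRetDecomp.flatMap fun t ht => isRetDecomp_retDecomp (hj t (hl.1 t ht))
  rwa [← wordApply_flatten, hl.2, wordApply_mPow_add] at this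

lemma decompMat_zero_self [Fintype (ReturnWords X u)] :
    decompMat τ X u 0 (ReturnWords X u) = 1 := by
  ext s r
  have hr : IsRetDecomp X u r [r] := ⟨by simp, by simp⟩
  rw [decompMat, countMat, Matrix.of_apply, wordApply_mPow_zero, retDecomp_eq hr,
    Matrix.one_apply, List.count_singleton]
  by_cases h : s = r
  · simp [h]
  · simp [h, Subtype.coe_injective.ne (Ne.symm h)]

namespace RetSub

variable {τu : List A → List (List A)}

lemma retMat_eq_decompMat (hτu : RetSub τ X u τu) [Fintype (ReturnWords X u)] :
    retMat τu (ReturnWords X u) = decompMat τ X u 1 (ReturnWords X u) := by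
  refine countMat_congr fun r hr => (retDecomp_eq ?_).symm
  rw [wordApply_mPow_succ, wordApply_mPow_zero]
  exact hτu.isRetDecomp hr

lemma retMat_pow (hτu : RetSub τ X u τu) [Fintype (ReturnWords X u)] (k : ℕ) :
    retMat τu (ReturnWords X u) ^ k = decompMat τ X u k (ReturnWords X u) := by
  induction k with
  | zero => rw [pow_zero, decompMat_zero_self]
  | succ k ih =>
    rw [pow_succ, ih, hτu.retMat_eq_decompMat,
      decompMat_mul (hτu.exists_isRetDecomp_mPow k) (hτu.exists_isRetDecomp_mPow 1), Nat.add_comm]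

end RetSub

end Counting

section Eigenvalues

variable {ι κ : Type*} [Fintype ι] [Fintype κ] [DecidableEq ι]

lemma pow_mulVec_eq_pow_smul {M : Matrix ι ι ℂ} {μ : ℂ} {x : ι → ℂ} (hx : M.mulVec x = μ • x)
    (n : ℕ) :
    (M ^ n).mulVec x = μ ^ n • x := by
  induction n with
  | zero => simp
  | succ n ih => rw [pow_succ, ← Matrix.mulVec_mulVec, hx, Matrix.mulVec_smul, ih, smul_smul,
      pow_succ, mul_comm]

/-- `P` carries eigenvectors of `M` to eigenvectors of `N`, and kills none of them since
`Q * P = Mⁿ` acts on them by `μⁿ ≠ 0`. -/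
lemma IsEig.of_mul_eq_mul {M : Matrix ι ι ℂ} {N : Matrix κ κ ℂ} (P : Matrix κ ι ℂ)
    (Q : Matrix ι κ ℂ) (n : ℕ) (hPM : P * M = N * P) (hQP : Q * P = M ^ n) {μ : ℂ} (hμ : μ ≠ 0)
    (h : IsEig M μ) : IsEig N μ := by
  obtain ⟨x, hx, hMx⟩ := h
  refine ⟨P.mulVec x, fun h0 => hx ?_, ?_⟩
  · have : Q.mulVec (P.mulVec x) = μ ^ n • x := by
      rw [Matrix.mulVec_mulVec, hQP, pow_mulVec_eq_pow_smul hMx]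
    rw [h0, Matrix.mulVec_zero] at this
    exact (smul_eq_zero.1 this.symm).resolve_left (pow_ne_zero n hμ)
  · rw [Matrix.mulVec_mulVec, ← hPM, ← Matrix.mulVec_mulVec, hMx, Matrix.mulVec_smul]

end Eigenvalues

theorem isEig_retMat_iff_of_exists_isRetDecomp [DecidableEq A] {τ : A → List A} {v : List A}
    {τu τv : List A → List (List A)} (hτu : RetSub τ X u τu) (hτv : RetSub τ X v τv)
    [Fintype (ReturnWords X u)] [Fintype (ReturnWords X v)] (n : ℕ)
    (hvu : ∀ t ∈ ReturnWords X v, ∃ l, IsRetDecomp X u t l)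
    (huv : ∀ t ∈ ReturnWords X u, ∃ l, IsRetDecomp X v (wordApply (mPow τ n) t) l)
    {μ : ℂ} (hμ : μ ≠ 0) :
    IsEig (retMat τu (ReturnWords X u)) μ ↔ IsEig (retMat τv (ReturnWords X v)) μ := by
  have hvu₀ : ∀ t ∈ ReturnWords X v, ∃ l, IsRetDecomp X u (wordApply (mPow τ 0) t) l := by
    simpa using hvu
  set L := decompMat τ X u 0 (ReturnWords X v)
  set K := decompMat τ X v n (ReturnWords X u)
  have hLM : L * retMat τv (ReturnWords X v) = retMat τu (ReturnWords X u) * L := by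
    rw [hτv.retMat_eq_decompMat, hτu.retMat_eq_decompMat,
      decompMat_mul hvu₀ (hτv.exists_isRetDecomp_mPow 1),
      decompMat_mul (hτu.exists_isRetDecomp_mPow 1) hvu₀]
  have hKM : K * retMat τu (ReturnWords X u) = retMat τv (ReturnWords X v) * K := by
    rw [hτv.retMat_eq_decompMat, hτu.retMat_eq_decompMat,
      decompMat_mul huv (hτu.exists_isRetDecomp_mPow 1),
      decompMat_mul (hτv.exists_isRetDecomp_mPow 1) huv, Nat.add_comm]
  have hLK : L * K = retMat τu (ReturnWords X u) ^ n := by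
    rw [hτu.retMat_pow, decompMat_mul hvu₀ huv, Nat.add_zero]
  have hKL : K * L = retMat τv (ReturnWords X v) ^ n := by
    rw [hτv.retMat_pow, decompMat_mul huv hvu₀, Nat.zero_add]
  exact ⟨IsEig.of_mul_eq_mul K L n hKM hLK hμ, IsEig.of_mul_eq_mul L K n hLM hKL hμ⟩

lemma occursAt_of_forall_eq {a : A} (h : ∀ b : A, b = a) (w : List A) (i : ℕ) :
    OccursAt X w i :=
  List.ext_getElem (by simp) fun k _ _ => (h _).trans (h _).symm

lemma Primitive.forall_eq_of_eq_singleton {τ : A → List A} (hprim : Primitive τ) {a : A}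
    (ha : τ a = [a]) (b : A) : b = a := by
  obtain ⟨k, -, hk⟩ := hprim
  have hpow : ∀ k, mPow τ k a = [a] := by
    intro k
    induction k with
    | zero => rfl
    | succ k ih => simp [mPow, ih, wordApply, ha]
  simpa [hpow k] using hk a b

/-- If `τ a = [a]` the alphabet is `{a}` and every word occurs everywhere; otherwise `τⁿ u`
is a prefix of `X` longer than `v` for `n = |v|`. -/
lemma exists_forall_occursAt_image {τ : A → List A} {a : A} (hne : Nonerasing τ)
    (hhead : (τ a).head? = some a) (hprim : Primitive τ) (hX0 : X 0 = a) (hfix : IsFixedPt τ X)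
    {v : List A} (hu : u ≠ []) (hpu : IsPrefix X u) (hpv : IsPrefix X v) :
    ∃ n, ∀ i, OccursAt X u i → OccursAt X v (wordApply (mPow τ n) (word X 0 i)).length := by
  obtain ⟨t, ht⟩ : ∃ t, τ a = a :: t := by
    cases h : τ a with
    | nil => simp [h] at hhead
    | cons x t => simp_all
  rcases t with _ | ⟨b, t⟩
  · exact ⟨0, fun i _ => occursAt_of_forall_eq (hprim.forall_eq_of_eq_singleton ht) v _⟩
  refine ⟨v.length, fun i hi => (hfix.occursAt_wordApply_mPow _ hi).of_prefix ?_⟩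
  have ha : [a] <+: u := hpu.prefix_of_length_le (by simp [OccursAt, word, hX0])
    (List.length_pos_iff.2 hu)
  have hlen := (ha.flatMap (mPow τ v.length)).length_le
  have hgrow := length_mPow_ge hne ht v.length
  simp only [List.flatMap_singleton] at hlen
  exact (hfix.isPrefix_wordApply_mPow _ hpu).prefix_of_length_le hpv
    (by simp only [wordApply]; omega)

end

theorem stmt9 {A : Type*} [DecidableEq A] (τ : A → List A) (a : A) (X : ℕ → A)
    (hne : Nonerasing τ) (hhead : (τ a).head? = some a) (hprim : Primitive τ)
    (hX0 : X 0 = a) (hfix : IsFixedPt τ X)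
    (u v : List A) (hu : u ≠ []) (hv : v ≠ [])
    (hpu : IsPrefix X u) (hpv : IsPrefix X v)
    (τu τv : List A → List (List A))
    (hτu : RetSub τ X u τu) (hτv : RetSub τ X v τv)
    [Fintype (ReturnWords X u)] [Fintype (ReturnWords X v)] :
    ∀ μ : ℂ, μ ≠ 0 →
      (IsEig (retMat τu (ReturnWords X u)) μ ↔
        IsEig (retMat τv (ReturnWords X v)) μ) := by
  intro μ hμ
  wlog hle : u.length ≤ v.length generalizing u v τu τv
  · exact (this v u hv hu hpv hpu τv τu hτv hτu (by omega)).symm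
  have huv : u <+: v := hpv.prefix_of_length_le hpu hle
  obtain ⟨n, himg⟩ := exists_forall_occursAt_image hne hhead hprim hX0 hfix hu hpu hpv
  exact isEig_retMat_iff_of_exists_isRetDecomp hτu hτv n
    (fun t ht => exists_isRetDecomp_of_prefix huv ht)
    (fun t ht => hfix.exists_isRetDecomp_image n himg ht) hμ

end Cobham
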